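/- arXiv:1506.05320 — 2 statements merged into one kernel-verified Lean document; each statement's English description precedes it below -/
import Mathlib

section
/- Let f : ℝ^n → ℝ be convex differentiable, U ⊆ ℝ^n closed convex, K a closed convex cone, ρ > 0, and let u*_ρ minimize ψ_ρ(u) = f(u) + (ρ/2)dist_K(Gu+g)² over U. If u* ∈ U is feasible, i.e., G u* + g ∈ K, and f(u*_ρ) ≥ f_* where f_* = inf_{u∈U} f(u), then dist_K(G u*_ρ + g) ≤ √((f(u*) − f_*)/ρ). -/
/-!
Move from `u*_ρ` towards the feasible point `u*` along `u_t = (1 - t) u*_ρ + t u*`. Since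
`G u* + g ∈ K` and `K` is convex, the distance of `G u_t + g` to `K` is at most `(1 - t) d`, where
`d = dist_K(G u*_ρ + g)`; together with convexity of `f`, minimality of `u*_ρ` gives
`t (f(u*_ρ) - f(u*)) + (ρ/2) d² (2t - t²) ≤ 0`. Dividing by `t` and letting `t → 0⁺` yields
`ρ d² ≤ f(u*) - f(u*_ρ) ≤ f(u*) - f_*`.
-/

open Set Filter Topology

lemma le_of_forall_mem_Ioc_le_add_mul {a b c : ℝ} (h : ∀ t ∈ Ioc (0 : ℝ) 1, a ≤ b + c * t) :
    a ≤ b := by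
  have hlim : Tendsto (fun t : ℝ => b + c * t) (𝓝[>] 0) (𝓝 b) := by
    have : Continuous fun t : ℝ => b + c * t := by fun_prop
    simpa using (this.tendsto 0).mono_left nhdsWithin_le_nhds
  exact ge_of_tendsto hlim (eventually_of_mem (Ioc_mem_nhdsGT one_pos) h)

lemma Convex.norm_sub_nearest_combo_le {E : Type*} [NormedAddCommGroup E] [NormedSpace ℝ E]
    {K : Set E} (hK : Convex ℝ K) {P : E → E} (hP : ∀ x, P x ∈ K ∧ ∀ y ∈ K, ‖x - P x‖ ≤ ‖x - y‖)
    (x : E) {y : E} (hy : y ∈ K) {t : ℝ} (ht₀ : 0 ≤ t) (ht₁ : t ≤ 1) :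
    ‖(1 - t) • x + t • y - P ((1 - t) • x + t • y)‖ ≤ (1 - t) * ‖x - P x‖ := by
  have hmem : (1 - t) • P x + t • y ∈ K := hK (hP x).1 hy (by linarith) ht₀ (by ring)
  calc ‖(1 - t) • x + t • y - P ((1 - t) • x + t • y)‖
      ≤ ‖(1 - t) • x + t • y - ((1 - t) • P x + t • y)‖ := (hP _).2 _ hmem
    _ = ‖(1 - t) • (x - P x)‖ := by congr 1; module
    _ = (1 - t) * ‖x - P x‖ := by rw [norm_smul, Real.norm_of_nonneg (by linarith)]

theorem mul_sq_le_sub_of_isMinOn_add_penalty {V : Type*} [AddCommGroup V] [Module ℝ V]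
    {U : Set V} {f φ : V → ℝ} {ρ : ℝ} {u₀ u₁ : V} (hf : ConvexOn ℝ U f) (hρ : 0 ≤ ρ)
    (hu₀ : u₀ ∈ U) (hu₁ : u₁ ∈ U) (hmin : IsMinOn (fun u => f u + ρ / 2 * φ u ^ 2) U u₀)
    (hφ₀ : ∀ u, 0 ≤ φ u)
    (hφ : ∀ t ∈ Ioc (0 : ℝ) 1, φ ((1 - t) • u₀ + t • u₁) ≤ (1 - t) * φ u₀) :
    ρ * φ u₀ ^ 2 ≤ f u₁ - f u₀ := by
  refine le_of_forall_mem_Ioc_le_add_mul (c := ρ / 2 * φ u₀ ^ 2) fun t ht => ?_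
  obtain ⟨ht₀, ht₁⟩ := ht
  set ut := (1 - t) • u₀ + t • u₁
  have hmin_t : f u₀ + ρ / 2 * φ u₀ ^ 2 ≤ f ut + ρ / 2 * φ ut ^ 2 :=
    isMinOn_iff.1 hmin ut (hf.1 hu₀ hu₁ (by linarith) ht₀.le (by ring))
  have hf_t : f ut ≤ (1 - t) * f u₀ + t * f u₁ :=
    hf.2 hu₀ hu₁ (by linarith) ht₀.le (by ring)
  have hφ_t : φ ut ^ 2 ≤ ((1 - t) * φ u₀) ^ 2 :=
    pow_le_pow_left₀ (hφ₀ ut) (hφ t ⟨ht₀, ht₁⟩) 2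
  have key : t * (ρ * φ u₀ ^ 2 - (f u₁ - f u₀ + ρ / 2 * φ u₀ ^ 2 * t)) ≤ 0 := by
    nlinarith [mul_le_mul_of_nonneg_left hφ_t (by positivity : 0 ≤ ρ / 2)]
  nlinarith [nonpos_of_mul_nonpos_right key ht₀]

theorem stmt9_general (n m : ℕ)
    (f : EuclideanSpace ℝ (Fin n) → ℝ) (hf : ConvexOn ℝ Set.univ f)
    (U : Set (EuclideanSpace ℝ (Fin n))) (hUconv : Convex ℝ U)
    (K : Set (EuclideanSpace ℝ (Fin m))) (hKconv : Convex ℝ K)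
    (P : EuclideanSpace ℝ (Fin m) → EuclideanSpace ℝ (Fin m))
    (hP : ∀ x, P x ∈ K ∧ ∀ y ∈ K, ‖x - P x‖ ≤ ‖x - y‖)
    (G : EuclideanSpace ℝ (Fin n) →L[ℝ] EuclideanSpace ℝ (Fin m))
    (g : EuclideanSpace ℝ (Fin m)) (ρ : ℝ) (hρ : 0 < ρ)
    (uρ : EuclideanSpace ℝ (Fin n)) (huρ : uρ ∈ U)
    (hmin : ∀ u ∈ U, f uρ + ρ / 2 * ‖G uρ + g - P (G uρ + g)‖ ^ 2
      ≤ f u + ρ / 2 * ‖G u + g - P (G u + g)‖ ^ 2)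
    (ustar : EuclideanSpace ℝ (Fin n)) (hustar : ustar ∈ U)
    (hfeas : G ustar + g ∈ K)
    (fstar : ℝ) (hlb : ∀ u ∈ U, fstar ≤ f u) :
    ‖G uρ + g - P (G uρ + g)‖ ≤ Real.sqrt ((f ustar - fstar) / ρ) := by
  set φ := fun u => ‖G u + g - P (G u + g)‖
  have hφ : ∀ t ∈ Ioc (0 : ℝ) 1, φ ((1 - t) • uρ + t • ustar) ≤ (1 - t) * φ uρ := by
    rintro t ⟨ht₀, ht₁⟩
    have haff : G ((1 - t) • uρ + t • ustar) + g = (1 - t) • (G uρ + g) + t • (G ustar + g) := by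
      simp only [map_add, map_smul]; module
    simpa only [φ, haff] using hKconv.norm_sub_nearest_combo_le hP _ hfeas ht₀.le ht₁
  have hbound : ρ * φ uρ ^ 2 ≤ f ustar - f uρ :=
    mul_sq_le_sub_of_isMinOn_add_penalty (hf.subset (subset_univ U) hUconv) hρ.le huρ hustar
      (isMinOn_iff.2 hmin) (fun _ => norm_nonneg _) hφ
  have hgap : ρ * φ uρ ^ 2 ≤ f ustar - fstar := hbound.trans (by linarith [hlb uρ huρ])
  have hgap_nonneg : 0 ≤ f ustar - fstar := (by positivity : 0 ≤ ρ * φ uρ ^ 2).trans hgap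
  rw [Real.le_sqrt (norm_nonneg _) (div_nonneg hgap_nonneg hρ.le), le_div_iff₀' hρ]
  exact hgap

/-- Quadratic penalty infeasibility bound:
`dist_K(G u*_ρ + g) ≤ √((f(u*) − f_*)/ρ)`. -/
theorem stmt9 (n m : ℕ)
    (f : EuclideanSpace ℝ (Fin n) → ℝ) (hf : ConvexOn ℝ Set.univ f)
    (hfd : Differentiable ℝ f)
    (U : Set (EuclideanSpace ℝ (Fin n))) (hUcl : IsClosed U) (hUconv : Convex ℝ U)
    (K : Set (EuclideanSpace ℝ (Fin m))) (hKne : K.Nonempty) (hKcl : IsClosed K)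
    (hKconv : Convex ℝ K) (hKcone : ∀ c : ℝ, 0 ≤ c → ∀ x ∈ K, c • x ∈ K)
    (P : EuclideanSpace ℝ (Fin m) → EuclideanSpace ℝ (Fin m))
    (hP : ∀ x, P x ∈ K ∧ ∀ y ∈ K, ‖x - P x‖ ≤ ‖x - y‖)
    (G : EuclideanSpace ℝ (Fin n) →L[ℝ] EuclideanSpace ℝ (Fin m))
    (g : EuclideanSpace ℝ (Fin m)) (ρ : ℝ) (hρ : 0 < ρ)
    (uρ : EuclideanSpace ℝ (Fin n)) (huρ : uρ ∈ U)
    (hmin : ∀ u ∈ U, f uρ + ρ / 2 * ‖G uρ + g - P (G uρ + g)‖ ^ 2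
      ≤ f u + ρ / 2 * ‖G u + g - P (G u + g)‖ ^ 2)
    (ustar : EuclideanSpace ℝ (Fin n)) (hustar : ustar ∈ U)
    (hfeas : G ustar + g ∈ K)
    (fstar : ℝ) (hlb : ∀ u ∈ U, fstar ≤ f u) :
    ‖G uρ + g - P (G uρ + g)‖ ≤ Real.sqrt ((f ustar - fstar) / ρ) :=
  stmt9_general n m f hf U hUconv K hKconv P hP G g ρ hρ uρ huρ hmin ustar hustar hfeas fstar hlb
end

section
/- Under the setting of the smooth penalty problem, if ū ∈ U satisfies ψ_ρ(ū) − ψ_ρ(u*_ρ) ≤ ε (where ψ_ρ(u) = f(u) + (ρ/2)dist_K(Gu+g)² and u*_ρ minimizes ψ_ρ over U), then (ρ/2)·(dist_K(G u*_ρ + g) − dist_K(G ū + g))² ≤ ε; consequently dist_K(G ū + g) ≤ √(2ε/ρ) + dist_K(G u*_ρ + g). -/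
/-!
Write `d u = dist_K(G u + g)`; it is convex in `u` because `K` is convex. On the segment
`u_t = (1 - t) u*_ρ + t ū`, convexity of `f` and `d` bounds `ψ_ρ(u_t)` by
`(1 - t) f(u*_ρ) + t f(ū) + (ρ/2)((1 - t) d(u*_ρ) + t d(ū))²`, which must stay
`≥ ψ_ρ(u*_ρ)`. Dividing by `t` and letting `t → 0⁺` gives the first-order inequality
`ρ d(u*_ρ) (d(u*_ρ) - d(ū)) ≤ f(ū) - f(u*_ρ)`; adding `(ρ/2)(d(ū)² - d(u*_ρ)²)` to both
sides turns the left side into `(ρ/2)(d(u*_ρ) - d(ū))²` and the right side into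
`ψ_ρ(ū) - ψ_ρ(u*_ρ) ≤ ε`.
-/

open Set Filter Topology

theorem convexOn_norm_sub_of_isNearest {F : Type*} [SeminormedAddCommGroup F]
    [NormedSpace ℝ F] {K : Set F} {P : F → F} (hK : Convex ℝ K)
    (hP : ∀ x, P x ∈ K ∧ ∀ y ∈ K, ‖x - P x‖ ≤ ‖x - y‖) :
    ConvexOn ℝ univ (fun x => ‖x - P x‖) := by
  refine ⟨convex_univ, fun x _ y _ a b ha hb hab => ?_⟩
  have hmem : a • P x + b • P y ∈ K := hK (hP x).1 (hP y).1 ha hb hab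
  calc ‖a • x + b • y - P (a • x + b • y)‖
      ≤ ‖a • x + b • y - (a • P x + b • P y)‖ := (hP _).2 _ hmem
    _ = ‖a • (x - P x) + b • (y - P y)‖ := by congr 1; module
    _ ≤ a • ‖x - P x‖ + b • ‖y - P y‖ :=
      (convexOn_norm convex_univ).2 trivial trivial ha hb hab

theorem le_of_forall_sub_mul_le {c q r : ℝ}
    (h : ∀ t : ℝ, 0 < t → t ≤ 1 → c - t * q ≤ r) : c ≤ r := by
  have hlim : Tendsto (fun t : ℝ => c - t * q) (𝓝[>] 0) (𝓝 c) := by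
    have : Continuous (fun t : ℝ => c - t * q) := by fun_prop
    simpa using (this.tendsto 0).mono_left nhdsWithin_le_nhds
  refine le_of_tendsto hlim ?_
  filter_upwards [Ioc_mem_nhdsGT one_pos] with t ht using h t ht.1 ht.2

theorem le_sqrt_add_of_mul_sq_sub_le {ρ ε a b : ℝ} (hρ : 0 < ρ)
    (h : ρ / 2 * (a - b) ^ 2 ≤ ε) : b ≤ √(2 * ε / ρ) + a := by
  have hsq : (a - b) ^ 2 ≤ 2 * ε / ρ := by
    rw [le_div_iff₀ hρ]
    linarith
  linarith [Real.abs_le_sqrt hsq, neg_abs_le (a - b)]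

section Penalty

variable {E : Type*} [AddCommGroup E] [Module ℝ E] {U : Set E} {f D : E → ℝ} {ρ : ℝ}
  {u₀ u : E}

theorem IsMinOn.mul_sub_le_sub_of_add_sq (hU : Convex ℝ U) (hf : ConvexOn ℝ U f)
    (hD : ConvexOn ℝ U D) (hD₀ : ∀ v ∈ U, 0 ≤ D v) (hρ : 0 ≤ ρ)
    (hmin : IsMinOn (fun v => f v + ρ / 2 * D v ^ 2) U u₀) (hu₀ : u₀ ∈ U) (hu : u ∈ U) :
    ρ * D u₀ * (D u₀ - D u) ≤ f u - f u₀ := by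
  refine le_of_forall_sub_mul_le (q := ρ / 2 * (D u₀ - D u) ^ 2) fun t ht₀ ht₁ => ?_
  have hs : 0 ≤ 1 - t := by linarith
  have hst : 1 - t + t = 1 := by ring
  have hut : (1 - t) • u₀ + t • u ∈ U := hU hu₀ hu hs ht₀.le hst
  have hf_le : f ((1 - t) • u₀ + t • u) ≤ (1 - t) * f u₀ + t * f u :=
    hf.2 hu₀ hu hs ht₀.le hst
  have hD_sq : D ((1 - t) • u₀ + t • u) ^ 2 ≤ ((1 - t) * D u₀ + t * D u) ^ 2 :=
    pow_le_pow_left₀ (hD₀ _ hut) (hD.2 hu₀ hu hs ht₀.le hst) 2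
  have hψ : f u₀ + ρ / 2 * D u₀ ^ 2
      ≤ (1 - t) * f u₀ + t * f u + ρ / 2 * ((1 - t) * D u₀ + t * D u) ^ 2 := by
    have hρ₂ : 0 ≤ ρ / 2 := by positivity
    linarith [isMinOn_iff.1 hmin _ hut, mul_le_mul_of_nonneg_left hD_sq hρ₂]
  refine le_of_mul_le_mul_left ?_ ht₀
  linear_combination hψ

theorem IsMinOn.mul_sq_sub_le_sub_of_add_sq (hU : Convex ℝ U) (hf : ConvexOn ℝ U f)
    (hD : ConvexOn ℝ U D) (hD₀ : ∀ v ∈ U, 0 ≤ D v) (hρ : 0 ≤ ρ)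
    (hmin : IsMinOn (fun v => f v + ρ / 2 * D v ^ 2) U u₀) (hu₀ : u₀ ∈ U) (hu : u ∈ U) :
    ρ / 2 * (D u₀ - D u) ^ 2 ≤ (f u + ρ / 2 * D u ^ 2) - (f u₀ + ρ / 2 * D u₀ ^ 2) := by
  linear_combination hmin.mul_sub_le_sub_of_add_sq hU hf hD hD₀ hρ hu₀ hu

end Penalty

theorem stmt10_general (n m : ℕ)
    (f : EuclideanSpace ℝ (Fin n) → ℝ) (hf : ConvexOn ℝ Set.univ f)
    (U : Set (EuclideanSpace ℝ (Fin n))) (hUconv : Convex ℝ U)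
    (K : Set (EuclideanSpace ℝ (Fin m)))
    (hKconv : Convex ℝ K)
    (P : EuclideanSpace ℝ (Fin m) → EuclideanSpace ℝ (Fin m))
    (hP : ∀ x, P x ∈ K ∧ ∀ y ∈ K, ‖x - P x‖ ≤ ‖x - y‖)
    (G : EuclideanSpace ℝ (Fin n) →L[ℝ] EuclideanSpace ℝ (Fin m))
    (g : EuclideanSpace ℝ (Fin m)) (ρ ε : ℝ) (hρ : 0 < ρ)
    (uρ : EuclideanSpace ℝ (Fin n)) (huρ : uρ ∈ U)
    (hmin : ∀ u ∈ U, f uρ + ρ / 2 * ‖G uρ + g - P (G uρ + g)‖ ^ 2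
      ≤ f u + ρ / 2 * ‖G u + g - P (G u + g)‖ ^ 2)
    (ubar : EuclideanSpace ℝ (Fin n)) (hubar : ubar ∈ U)
    (hε : (f ubar + ρ / 2 * ‖G ubar + g - P (G ubar + g)‖ ^ 2)
      - (f uρ + ρ / 2 * ‖G uρ + g - P (G uρ + g)‖ ^ 2) ≤ ε) :
    ρ / 2 * (‖G uρ + g - P (G uρ + g)‖ - ‖G ubar + g - P (G ubar + g)‖) ^ 2 ≤ ε ∧
    ‖G ubar + g - P (G ubar + g)‖
      ≤ Real.sqrt (2 * ε / ρ) + ‖G uρ + g - P (G uρ + g)‖ := by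
  have hD : ConvexOn ℝ univ (fun u => ‖G u + g - P (G u + g)‖) :=
    (convexOn_norm_sub_of_isNearest hKconv hP).comp_affineMap
      ⟨fun u => G u + g, G.toLinearMap, fun _ _ => by
        simp only [vadd_eq_add, map_add, ContinuousLinearMap.coe_coe]; abel⟩
  have hsq := (isMinOn_iff.2 hmin).mul_sq_sub_le_sub_of_add_sq hUconv
    (hf.subset (subset_univ U) hUconv) (hD.subset (subset_univ U) hUconv)
    (fun _ _ => norm_nonneg _) hρ.le huρ hubar
  have hsq_ε := hsq.trans hε
  exact ⟨hsq_ε, le_sqrt_add_of_mul_sq_sub_le hρ hsq_ε⟩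

/-- Smooth penalty: if `ψ_ρ(ū) − ψ_ρ(u*_ρ) ≤ ε` then
`(ρ/2)(dist_K(Gu*_ρ+g) − dist_K(Gū+g))² ≤ ε`, hence
`dist_K(Gū+g) ≤ √(2ε/ρ) + dist_K(Gu*_ρ+g)`. -/
theorem stmt10 (n m : ℕ)
    (f : EuclideanSpace ℝ (Fin n) → ℝ) (hf : ConvexOn ℝ Set.univ f)
    (hfd : Differentiable ℝ f)
    (U : Set (EuclideanSpace ℝ (Fin n))) (hUcl : IsClosed U) (hUconv : Convex ℝ U)
    (K : Set (EuclideanSpace ℝ (Fin m))) (hKne : K.Nonempty) (hKcl : IsClosed K)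
    (hKconv : Convex ℝ K) (hKcone : ∀ c : ℝ, 0 ≤ c → ∀ x ∈ K, c • x ∈ K)
    (P : EuclideanSpace ℝ (Fin m) → EuclideanSpace ℝ (Fin m))
    (hP : ∀ x, P x ∈ K ∧ ∀ y ∈ K, ‖x - P x‖ ≤ ‖x - y‖)
    (G : EuclideanSpace ℝ (Fin n) →L[ℝ] EuclideanSpace ℝ (Fin m))
    (g : EuclideanSpace ℝ (Fin m)) (ρ ε : ℝ) (hρ : 0 < ρ)
    (uρ : EuclideanSpace ℝ (Fin n)) (huρ : uρ ∈ U)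
    (hmin : ∀ u ∈ U, f uρ + ρ / 2 * ‖G uρ + g - P (G uρ + g)‖ ^ 2
      ≤ f u + ρ / 2 * ‖G u + g - P (G u + g)‖ ^ 2)
    (ubar : EuclideanSpace ℝ (Fin n)) (hubar : ubar ∈ U)
    (hε : (f ubar + ρ / 2 * ‖G ubar + g - P (G ubar + g)‖ ^ 2)
      - (f uρ + ρ / 2 * ‖G uρ + g - P (G uρ + g)‖ ^ 2) ≤ ε) :
    ρ / 2 * (‖G uρ + g - P (G uρ + g)‖ - ‖G ubar + g - P (G ubar + g)‖) ^ 2 ≤ ε ∧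
    ‖G ubar + g - P (G ubar + g)‖
      ≤ Real.sqrt (2 * ε / ρ) + ‖G uρ + g - P (G uρ + g)‖ :=
  stmt10_general n m f hf U hUconv K hKconv P hP G g ρ ε hρ uρ huρ hmin ubar hubar hε
end
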